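/- Under the symmetric noise group testing model with crossover probability ρ ∈ (0,1/2): if S is a defective set, j ∈ S, and y is a length-n outcome sequence in which item j appears alone (without any other defective item) in at most m tests, then the likelihood under defective set S∖{j} satisfies ℙ_{S∖{j}}[y] ≥ ℙ_S[y]·(ρ/(1−ρ))^m. -/
import Mathlib


/-- Symmetric-noise adaptive group testing: each test outcome is
`(⋁_{j∈S} X_j) ⊕ Z`, `Z ∼ Bernoulli(ρ)` independent across tests; tests are
deterministic given past outcomes.  If item `j ∈ S` appears alone (without any
other defective) in at most `m` of the realized tests for outcome sequence `y`,
then `ℙ_{S∖{j}}[y] ≥ ℙ_S[y]·(ρ/(1−ρ))^m`. -/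
theorem stmt_14 {p n : ℕ} (ρ : ℝ) (hρ : ρ ∈ Set.Ioo (0 : ℝ) (1 / 2))
    (S : Finset (Fin p)) (j : Fin p) (hj : j ∈ S)
    -- adaptive deterministic test design: the i-th test depends on past outcomes
    (x : (i : Fin n) → (Fin i → Bool) → Finset (Fin p))
    -- a realized outcome sequence
    (y : Fin n → Bool)
    -- the realized tests
    (T : Fin n → Finset (Fin p))
    (hT : ∀ i : Fin n, T i = x i (fun i' : Fin i => y ⟨i', Nat.lt_trans i'.isLt i.isLt⟩))
    -- likelihood of the outcome sequence under a given defective set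
    (L : Finset (Fin p) → ℝ)
    (hL : ∀ S' : Finset (Fin p), L S' =
      ∏ i : Fin n,
        if (S' ∩ T i).Nonempty then (if y i then 1 - ρ else ρ)
        else (if y i then ρ else 1 - ρ))
    -- item j is the unique defective in at most m tests
    (m : ℕ)
    (hm : (Finset.univ.filter (fun i : Fin n => S ∩ T i = {j})).card ≤ m) :
    L S * (ρ / (1 - ρ)) ^ m ≤ L (S.erase j) := by
  obtain ⟨hρ0, hρh⟩ := hρ
  have hρ1 : ρ < 1 - ρ := by linarith
  have h1ρ : (0:ℝ) < 1 - ρ := by linarith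
  set r : ℝ := ρ / (1 - ρ) with hr
  have hr0 : 0 < r := div_pos hρ0 h1ρ
  have hr1 : r ≤ 1 := by
    rw [hr, div_le_one h1ρ]; linarith
  set c := (Finset.univ.filter (fun i : Fin n => S ∩ T i = {j})).card with hc
  -- per-factor functions
  have fS_nonneg : ∀ i : Fin n,
      (0:ℝ) ≤ (if (S ∩ T i).Nonempty then (if y i then 1 - ρ else ρ)
        else (if y i then ρ else 1 - ρ)) := by
    intro i; split <;> split <;> linarith
  -- key: L S * r ^ c ≤ L (S.erase j)
  have key : L S * r ^ c ≤ L (S.erase j) := by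
    rw [hL S, hL (S.erase j), hc]
    rw [Finset.card_filter, ← Finset.prod_pow_eq_pow_sum, ← Finset.prod_mul_distrib]
    apply Finset.prod_le_prod
    · intro i _
      have := fS_nonneg i
      positivity
    · intro i _
      have hin : S.erase j ∩ T i = (S ∩ T i).erase j := Finset.erase_inter j S (T i)
      by_cases h : S ∩ T i = {j}
      · have h1 : (S ∩ T i).Nonempty := h ▸ Finset.singleton_nonempty j
        have h2 : ¬ (S.erase j ∩ T i).Nonempty := by
          rw [hin, h, Finset.erase_singleton]
          exact Finset.not_nonempty_empty
        simp only [if_pos h1, if_neg h2, if_pos h]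
        by_cases hy : y i
        · rw [if_pos hy, if_pos hy, pow_one, hr, mul_comm, div_mul_eq_mul_div,
            div_le_iff₀ h1ρ]
        · rw [if_neg hy, if_neg hy, pow_one, hr, mul_comm, div_mul_eq_mul_div,
            div_le_iff₀ h1ρ]
          nlinarith
      · have hiff : (S.erase j ∩ T i).Nonempty ↔ (S ∩ T i).Nonempty := by
          rw [hin]
          constructor
          · rintro ⟨b, hb⟩
            exact ⟨b, Finset.mem_of_mem_erase hb⟩
          · intro hne
            by_contra hc'
            apply h
            rw [Finset.eq_singleton_iff_unique_mem]
            have hall : ∀ b ∈ S ∩ T i, b = j := by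
              intro b hb
              by_contra hbj
              exact hc' ⟨b, Finset.mem_erase.mpr ⟨hbj, hb⟩⟩
            obtain ⟨b, hb⟩ := hne
            exact ⟨hall b hb ▸ hb, hall⟩
        rw [if_neg h, pow_zero, mul_one, if_congr hiff rfl rfl]
  calc L S * r ^ m ≤ L S * r ^ c := by
        apply mul_le_mul_of_nonneg_left (pow_le_pow_of_le_one (le_of_lt hr0) hr1 hm)
        rw [hL S]
        exact Finset.prod_nonneg fun i _ => fS_nonneg i
    _ ≤ L (S.erase j) := key
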